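/- For every s ∈ (0,1) and every λ ≥ 0, one has λ^s = (1/Γ(-s)) ∫₀^∞ (e^{-tλ} − 1) t^{−1−s} dt, where Γ(−s) is defined as −Γ(1−s)/s. -/
import Mathlib

open Real MeasureTheory Set Filter Topology


private lemma integrable_key {s : ℝ} (hs0 : 0 < s) (hs1 : s < 1) :
    IntegrableOn (fun t : ℝ => (Real.exp (-t) - 1) * t ^ (-1 - s)) (Ioi 0) := by
  rw [← Ioc_union_Ioi_eq_Ioi (zero_le_one : (0:ℝ) ≤ 1), integrableOn_union]
  constructor
  · have hg : IntegrableOn (fun t : ℝ => t ^ (-s)) (Ioc 0 1) :=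
      (intervalIntegral.intervalIntegrable_rpow' (by linarith : (-1:ℝ) < -s)).1
    have hc : ContinuousOn (fun t : ℝ => (Real.exp (-t) - 1) * t ^ (-1 - s)) (Ioc 0 1) :=
      ((continuous_neg.rexp.sub continuous_const).continuousOn).mul
        (continuousOn_id.rpow_const (fun x hx => Or.inl (ne_of_gt hx.1)))
    refine MeasureTheory.Integrable.mono hg (hc.aestronglyMeasurable measurableSet_Ioc) ?_
    filter_upwards [ae_restrict_mem measurableSet_Ioc] with t ht
    have ht0 : 0 < t := ht.1
    have hb : |Real.exp (-t) - 1| ≤ t := by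
      rw [abs_sub_comm, abs_of_nonneg (by
        have := Real.exp_le_one_iff.mpr (by linarith : -t ≤ 0); linarith)]
      have := Real.add_one_le_exp (-t); linarith
    have hmul : t * t ^ (-1 - s) = t ^ (-s) := by
      nth_rewrite 1 [← Real.rpow_one t]
      rw [← Real.rpow_add ht0]; congr 1; ring
    rw [Real.norm_eq_abs, Real.norm_eq_abs, abs_mul,
      abs_of_nonneg (Real.rpow_nonneg ht0.le _), abs_of_nonneg (Real.rpow_nonneg ht0.le _)]
    calc |Real.exp (-t) - 1| * t ^ (-1 - s) ≤ t * t ^ (-1 - s) := by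
          exact mul_le_mul_of_nonneg_right hb (Real.rpow_nonneg ht0.le _)
      _ = t ^ (-s) := hmul
  · have hg : IntegrableOn (fun t : ℝ => t ^ (-1 - s)) (Ioi 1) :=
      integrableOn_Ioi_rpow_of_lt (by linarith : (-1 : ℝ) - s < -1) one_pos
    have hc : ContinuousOn (fun t : ℝ => (Real.exp (-t) - 1) * t ^ (-1 - s)) (Ioi 1) :=
      ((continuous_neg.rexp.sub continuous_const).continuousOn).mul
        (continuousOn_id.rpow_const (fun x hx => Or.inl (ne_of_gt (lt_trans one_pos hx))))
    refine MeasureTheory.Integrable.mono hg (hc.aestronglyMeasurable measurableSet_Ioi) ?_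
    filter_upwards [ae_restrict_mem measurableSet_Ioi] with t ht
    have ht0 : (0:ℝ) < t := lt_trans one_pos ht
    have hb : |Real.exp (-t) - 1| ≤ 1 := by
      have h1 : Real.exp (-t) ≤ 1 := Real.exp_le_one_iff.mpr (by linarith)
      have h2 : 0 < Real.exp (-t) := Real.exp_pos _
      rw [abs_sub_comm, abs_of_nonneg (by linarith)]; linarith
    rw [Real.norm_eq_abs, Real.norm_eq_abs, abs_mul,
      abs_of_nonneg (Real.rpow_nonneg ht0.le _)]
    nth_rewrite 2 [← one_mul (t ^ (-1 - s))]
    exact mul_le_mul_of_nonneg_right hb (Real.rpow_nonneg ht0.le _)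

private lemma key_integral {s : ℝ} (hs0 : 0 < s) (hs1 : s < 1) :
    ∫ t in Ioi (0:ℝ), (Real.exp (-t) - 1) * t ^ (-1 - s) = -(Real.Gamma (1 - s) / s) := by
  have hGi : IntegrableOn (fun t : ℝ => Real.exp (-t) * t ^ (-s)) (Ioi 0) := by
    have h := Real.GammaIntegral_convergent (by linarith : (0:ℝ) < 1 - s)
    have he : (fun x : ℝ => Real.exp (-x) * x ^ (1 - s - 1)) =
        fun x : ℝ => Real.exp (-x) * x ^ (-s) := by
      funext x; norm_num
    rwa [he] at h
  have hsne : (-s : ℝ) ≠ 0 := neg_ne_zero.mpr hs0.ne'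
  have hGamma : Real.Gamma (1 - s) = ∫ x in Ioi (0:ℝ), Real.exp (-x) * x ^ (-s) := by
    rw [Real.Gamma_eq_integral (by linarith : (0:ℝ) < 1 - s)]
    congr 1; funext x; norm_num
  have key := integral_Ioi_mul_deriv_eq_deriv_mul
    (u := fun t => Real.exp (-t) - 1) (u' := fun t => -Real.exp (-t))
    (v := fun t => t ^ (-s) / (-s)) (v' := fun t => t ^ (-1 - s))
    (a := 0) (a' := 0) (b' := 0)
    (fun x _ => by simpa using ((hasDerivAt_neg x).exp.sub_const 1))
    (fun x hx => by
      have h := (Real.hasDerivAt_rpow_const (p := -s) (Or.inl (ne_of_gt hx))).div_const (-s)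
      rw [mul_div_cancel_left₀ _ hsne] at h
      rw [show (-1 : ℝ) - s = -s - 1 by ring]
      exact h)
    (integrable_key hs0 hs1)
    (by
      have h := hGi.const_mul (1/s)
      refine MeasureTheory.IntegrableOn.congr_fun h (fun t _ => ?_) measurableSet_Ioi
      show (1/s) * (Real.exp (-t) * t ^ (-s)) = -Real.exp (-t) * (t ^ (-s) / (-s))
      rw [div_neg]; ring)
    (by
      apply squeeze_zero_norm' (a := fun t : ℝ => t ^ (1 - s) / s)
      · filter_upwards [self_mem_nhdsWithin] with t (ht : (0:ℝ) < t)
        have hb : |Real.exp (-t) - 1| ≤ t := by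
          rw [abs_sub_comm, abs_of_nonneg (by
            have := Real.exp_le_one_iff.mpr (by linarith : -t ≤ 0); linarith)]
          have := Real.add_one_le_exp (-t); linarith
        have hmul : t * t ^ (-s) = t ^ (1 - s) := by
          nth_rewrite 1 [← Real.rpow_one t]
          rw [← Real.rpow_add ht, show (1:ℝ) + -s = 1 - s by ring]
        show ‖(Real.exp (-t) - 1) * (t ^ (-s) / (-s))‖ ≤ t ^ (1 - s) / s
        rw [Real.norm_eq_abs, abs_mul, abs_div, abs_neg, abs_of_nonneg hs0.le,
          abs_of_nonneg (Real.rpow_nonneg ht.le _)]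
        rw [← hmul, mul_div_assoc]
        exact mul_le_mul_of_nonneg_right hb (by positivity)
      · have h1 : Tendsto (fun t : ℝ => t ^ (1 - s)) (𝓝 0) (𝓝 ((0:ℝ) ^ (1 - s))) :=
          (Real.continuousAt_rpow_const 0 (1 - s) (Or.inr (by linarith))).tendsto
        rw [Real.zero_rpow (by linarith : (1:ℝ) - s ≠ 0)] at h1
        have h2 : Tendsto (fun t : ℝ => t ^ (1 - s)) (𝓝[>] (0:ℝ)) (𝓝 0) :=
          h1.mono_left nhdsWithin_le_nhds
        simpa using h2.div_const s)
    (by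
      have h1 : Tendsto (fun t : ℝ => Real.exp (-t) - 1) atTop (𝓝 (0 - 1)) :=
        (Real.tendsto_exp_atBot.comp tendsto_neg_atTop_atBot).sub_const 1
      have h2 : Tendsto (fun t : ℝ => t ^ (-s) / (-s)) atTop (𝓝 (0 / (-s))) :=
        (tendsto_rpow_neg_atTop hs0).div_const (-s)
      have := h1.mul h2
      norm_num at this
      exact this)
  rw [key]
  have hc : ∫ t in Ioi (0:ℝ), -Real.exp (-t) * (t ^ (-s) / (-s)) = Real.Gamma (1 - s) / s := by
    have e1 : ∀ t : ℝ, -Real.exp (-t) * (t ^ (-s) / (-s)) =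
        (1/s) * (Real.exp (-t) * t ^ (-s)) := by
      intro t; rw [div_neg]; ring
    simp_rw [e1]
    rw [MeasureTheory.integral_const_mul, ← hGamma]
    ring
  rw [hc]; ring

theorem stmt_0 (s lam : ℝ) (hs : 0 < s ∧ s < 1) (hlam : 0 ≤ lam) :
    lam ^ s =
      (1 / (-(Real.Gamma (1 - s) / s))) *
        ∫ t in Ioi (0 : ℝ), (Real.exp (-t * lam) - 1) * t ^ (-1 - s) := by
  obtain ⟨hs0, hs1⟩ := hs
  have hΓ : 0 < Real.Gamma (1 - s) := Real.Gamma_pos_of_pos (by linarith)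
  have hI0 : (-(Real.Gamma (1 - s) / s)) ≠ 0 := by
    have : 0 < Real.Gamma (1 - s) / s := div_pos hΓ hs0
    linarith
  rcases eq_or_lt_of_le hlam with h0 | hpos
  · rw [← h0]
    simp [Real.zero_rpow hs0.ne']
  · have hsub : (∫ t in Ioi (0:ℝ), (Real.exp (-t * lam) - 1) * t ^ (-1 - s))
        = lam ^ s * ∫ t in Ioi (0:ℝ), (Real.exp (-t) - 1) * t ^ (-1 - s) := by
      have h1 := MeasureTheory.integral_comp_mul_left_Ioi
        (fun u : ℝ => (Real.exp (-u) - 1) * u ^ (-1 - s)) 0 hpos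
      have hone : lam ^ ((1:ℝ) + s) * lam ^ (-1 - s) = 1 := by
        rw [← Real.rpow_add hpos]; norm_num
      have h2 : EqOn (fun t : ℝ => (Real.exp (-t * lam) - 1) * t ^ (-1 - s))
          (fun t : ℝ => lam ^ ((1:ℝ) + s) *
            ((Real.exp (-(lam * t)) - 1) * (lam * t) ^ (-1 - s))) (Ioi 0) := by
        intro t ht
        simp only
        rw [Real.mul_rpow hpos.le (le_of_lt ht), show -t * lam = -(lam * t) by ring]
        calc (Real.exp (-(lam * t)) - 1) * t ^ (-1 - s)
            = (lam ^ ((1:ℝ) + s) * lam ^ (-1 - s)) *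
                ((Real.exp (-(lam * t)) - 1) * t ^ (-1 - s)) := by rw [hone, one_mul]
          _ = lam ^ ((1:ℝ) + s) *
                ((Real.exp (-(lam * t)) - 1) * (lam ^ (-1 - s) * t ^ (-1 - s))) := by ring
      rw [setIntegral_congr_fun measurableSet_Ioi h2, MeasureTheory.integral_const_mul,
        h1, mul_zero, smul_eq_mul, ← mul_assoc]
      congr 1
      rw [← Real.rpow_neg_one lam, ← Real.rpow_add hpos]
      norm_num
    rw [hsub, key_integral hs0 hs1, one_div, mul_comm (lam ^ s), ← mul_assoc,
      inv_mul_cancel₀ hI0, one_mul]
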